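/- Let A be a square matrix, τ₁ ≠ τ₂ scalars with A + τ₁I and A + τ₂I invertible, and set Pⱼ⁻¹ = (A + τⱼI)⁻¹. For a vector b, let W ⊆ 𝕂ⁿ be the subspace spanned by all vectors of the form q(P₁⁻¹, P₂⁻¹)b where q ranges over monomials (words) of degree at most m in the two (non-commuting) variables. Then W = 𝒦_{m+1}(P₁⁻¹, b) + 𝒦_{m+1}(P₂⁻¹, b); consequently dim W ≤ 2m + 1. -/

import Mathlib

/-!
Write Qⱼ = (A + τⱼI)⁻¹ and S_d = 𝒦_d(Q₁, b) + 𝒦_d(Q₂, b). The resolvent identity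
Q₁Q₂ = (τ₂ − τ₁)⁻¹(Q₁ − Q₂), and its mirror image, turn a mixed product Q₁Q₂ᵏb into a
combination of Q₁Q₂ᵏ⁻¹b and Q₂ᵏb, so by induction each Qⱼ maps S_d into S_{d+1}; hence every
word of length at most m applied to b lies in S_{m+1}, while the pure powers show the converse.
Both Krylov spaces contain b, which gives the bound 1 + m + m on the dimension.
-/

open Matrix

/-- The Krylov subspace 𝒦ₖ(B, w) = span{w, Bw, …, B^{k−1}w}. -/
def krylov {K : Type*} [Field K] {n : ℕ} (m : ℕ)
    (B : Matrix (Fin n) (Fin n) K) (w : Fin n → K) : Submodule K (Fin n → K) :=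
  Submodule.span K (Set.range fun k : Fin m => (B ^ (k : ℕ)) *ᵥ w)

theorem Matrix.inv_add_smul_one_mul_inv_add_smul_one {ι K : Type*} [Fintype ι] [DecidableEq ι]
    [Field K] (A : Matrix ι ι K) {τ₁ τ₂ : K} (hτ : τ₁ ≠ τ₂)
    (h₁ : IsUnit (A + τ₁ • (1 : Matrix ι ι K))) (h₂ : IsUnit (A + τ₂ • (1 : Matrix ι ι K))) :
    (A + τ₁ • 1)⁻¹ * (A + τ₂ • 1)⁻¹ =
      (τ₂ - τ₁)⁻¹ • ((A + τ₁ • 1)⁻¹ - (A + τ₂ • 1)⁻¹) := by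
  set R₁ := (A + τ₁ • (1 : Matrix ι ι K))⁻¹
  set R₂ := (A + τ₂ • (1 : Matrix ι ι K))⁻¹
  have hR₁ : R₁ * (A + τ₁ • 1) = 1 :=
    nonsing_inv_mul _ ((isUnit_iff_isUnit_det _).mp h₁)
  have hR₂ : (A + τ₂ • 1) * R₂ = 1 :=
    mul_nonsing_inv _ ((isUnit_iff_isUnit_det _).mp h₂)
  have key : (τ₂ - τ₁) • (R₁ * R₂) = R₁ - R₂ :=
    calc (τ₂ - τ₁) • (R₁ * R₂)
        = R₁ * ((A + τ₂ • 1) - (A + τ₁ • 1)) * R₂ := by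
          rw [add_sub_add_left_eq_sub, ← sub_smul, Matrix.mul_smul, Matrix.smul_mul, mul_one]
      _ = R₁ * ((A + τ₂ • 1) * R₂) - R₁ * (A + τ₁ • 1) * R₂ := by noncomm_ring
      _ = R₁ - R₂ := by rw [hR₁, hR₂, mul_one, one_mul]
  rw [← key, smul_smul, inv_mul_cancel₀ (sub_ne_zero.mpr hτ.symm), one_smul]

section Krylov

variable {K : Type*} [Field K] {n : ℕ}

theorem krylov_mono {m m' : ℕ} (h : m ≤ m') (B : Matrix (Fin n) (Fin n) K) (w : Fin n → K) :
    krylov m B w ≤ krylov m' B w :=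
  Submodule.span_mono <| Set.range_subset_iff.mpr fun k => ⟨Fin.castLE h k, rfl⟩

theorem pow_mulVec_mem_krylov {m k : ℕ} (hk : k < m) (B : Matrix (Fin n) (Fin n) K)
    (w : Fin n → K) : (B ^ k) *ᵥ w ∈ krylov m B w :=
  Submodule.subset_span ⟨⟨k, hk⟩, rfl⟩

theorem self_mem_krylov {m : ℕ} (hm : 0 < m) (B : Matrix (Fin n) (Fin n) K) (w : Fin n → K) :
    w ∈ krylov m B w := by
  simpa using pow_mulVec_mem_krylov hm B w

theorem finrank_krylov_le (m : ℕ) (B : Matrix (Fin n) (Fin n) K) (w : Fin n → K) :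
    Module.finrank K (krylov m B w) ≤ m :=
  (finrank_range_le_card _).trans_eq (Fintype.card_fin m)

theorem krylov_succ (m : ℕ) (B : Matrix (Fin n) (Fin n) K) (w : Fin n → K) :
    krylov (m + 1) B w = (K ∙ w) ⊔ krylov m B (B *ᵥ w) := by
  have : (fun k : Fin (m + 1) => (B ^ (k : ℕ)) *ᵥ w) =
      Fin.cons w fun k : Fin m => (B ^ (k : ℕ)) *ᵥ (B *ᵥ w) := by
    ext1 k
    refine Fin.cases (by simp) (fun k => ?_) k
    simp [mulVec_mulVec, ← pow_succ]
  rw [krylov, this, Fin.range_cons, Submodule.span_insert, krylov]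

theorem krylov_sup_krylov_mono {d d' : ℕ} (h : d ≤ d') (B₁ B₂ : Matrix (Fin n) (Fin n) K)
    (w : Fin n → K) :
    krylov d B₁ w ⊔ krylov d B₂ w ≤ krylov d' B₁ w ⊔ krylov d' B₂ w :=
  sup_le_sup (krylov_mono h B₁ w) (krylov_mono h B₂ w)

theorem finrank_krylov_sup_krylov_le (m : ℕ) (B₁ B₂ : Matrix (Fin n) (Fin n) K)
    (w : Fin n → K) :
    Module.finrank K ↥(krylov (m + 1) B₁ w ⊔ krylov (m + 1) B₂ w) ≤ 2 * m + 1 := by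
  have hw : Module.finrank K (K ∙ w) ≤ 1 :=
    (finrank_span_le_card ({w} : Set (Fin n → K))).trans_eq (by simp)
  have h₁ := finrank_krylov_le m B₁ (B₁ *ᵥ w)
  have h₂ := finrank_krylov_le m B₂ (B₂ *ᵥ w)
  have h₁₂ := Submodule.finrank_add_le_finrank_add_finrank
    (krylov m B₁ (B₁ *ᵥ w)) (krylov m B₂ (B₂ *ᵥ w))
  rw [krylov_succ, krylov_succ, ← sup_sup_distrib_left]
  have hsum := Submodule.finrank_add_le_finrank_add_finrank
    (K ∙ w) (krylov m B₁ (B₁ *ᵥ w) ⊔ krylov m B₂ (B₂ *ᵥ w))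
  omega

theorem mulVec_pow_mulVec_mem_krylov_sup {Q₁ Q₂ : Matrix (Fin n) (Fin n) K} {c : K}
    (hQ : Q₁ * Q₂ = c • (Q₁ - Q₂)) (v : Fin n → K) (k : ℕ) :
    Q₁ *ᵥ (Q₂ ^ k *ᵥ v) ∈ krylov (k + 2) Q₁ v ⊔ krylov (k + 2) Q₂ v := by
  induction k with
  | zero => simpa using Submodule.mem_sup_left (pow_mulVec_mem_krylov (by omega : 1 < 2) Q₁ v)
  | succ k ih =>
    have hsplit : Q₁ * Q₂ ^ (k + 1) = c • (Q₁ * Q₂ ^ k) - c • Q₂ ^ (k + 1) := by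
      rw [pow_succ', ← mul_assoc, hQ, smul_mul_assoc, sub_mul, smul_sub]
    rw [mulVec_mulVec, hsplit, sub_mulVec, smul_mulVec, smul_mulVec, ← mulVec_mulVec]
    exact Submodule.sub_mem _ (Submodule.smul_mem _ _ (krylov_sup_krylov_mono (by omega) _ _ _ ih))
      (Submodule.smul_mem _ _ (Submodule.mem_sup_right (pow_mulVec_mem_krylov (by omega) Q₂ v)))

theorem mulVec_mem_krylov_sup_succ {Q₁ Q₂ : Matrix (Fin n) (Fin n) K} {c : K}
    (hQ : Q₁ * Q₂ = c • (Q₁ - Q₂)) {v x : Fin n → K} {d : ℕ}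
    (hx : x ∈ krylov d Q₁ v ⊔ krylov d Q₂ v) :
    Q₁ *ᵥ x ∈ krylov (d + 1) Q₁ v ⊔ krylov (d + 1) Q₂ v := by
  suffices krylov d Q₁ v ⊔ krylov d Q₂ v ≤
      (krylov (d + 1) Q₁ v ⊔ krylov (d + 1) Q₂ v).comap (toLin' Q₁) from this hx
  refine sup_le (Submodule.span_le.mpr <| Set.range_subset_iff.mpr fun k => ?_)
    (Submodule.span_le.mpr <| Set.range_subset_iff.mpr fun k => ?_)
  · rw [SetLike.mem_coe, Submodule.mem_comap, toLin'_apply, mulVec_mulVec, ← pow_succ']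
    exact Submodule.mem_sup_left (pow_mulVec_mem_krylov (by omega) Q₁ v)
  · rw [SetLike.mem_coe, Submodule.mem_comap, toLin'_apply]
    exact krylov_sup_krylov_mono (by omega) _ _ _ (mulVec_pow_mulVec_mem_krylov_sup hQ v k)

theorem list_prod_mulVec_mem_krylov_sup {P : Fin 2 → Matrix (Fin n) (Fin n) K} {c₀ c₁ : K}
    (h₀ : P 0 * P 1 = c₀ • (P 0 - P 1)) (h₁ : P 1 * P 0 = c₁ • (P 1 - P 0))
    (v : Fin n → K) (w : List (Fin 2)) :
    (w.map P).prod *ᵥ v ∈ krylov (w.length + 1) (P 0) v ⊔ krylov (w.length + 1) (P 1) v := by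
  induction w with
  | nil => simpa using Submodule.mem_sup_left (self_mem_krylov one_pos (P 0) v)
  | cons i t ih =>
    rw [List.map_cons, List.prod_cons, ← mulVec_mulVec, List.length_cons]
    fin_cases i
    · exact mulVec_mem_krylov_sup_succ h₀ ih
    · rw [sup_comm] at ih ⊢
      exact mulVec_mem_krylov_sup_succ h₁ ih

theorem span_words_le_krylov_sup {P : Fin 2 → Matrix (Fin n) (Fin n) K} {c₀ c₁ : K}
    (h₀ : P 0 * P 1 = c₀ • (P 0 - P 1)) (h₁ : P 1 * P 0 = c₁ • (P 1 - P 0))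
    (v : Fin n → K) (m : ℕ) :
    Submodule.span K {x | ∃ w : List (Fin 2), w.length ≤ m ∧ x = (w.map P).prod *ᵥ v} ≤
      krylov (m + 1) (P 0) v ⊔ krylov (m + 1) (P 1) v := by
  rw [Submodule.span_le]
  rintro x ⟨w, hw, rfl⟩
  exact krylov_sup_krylov_mono (by omega) _ _ _ (list_prod_mulVec_mem_krylov_sup h₀ h₁ v w)

theorem krylov_le_span_words {ι : Type*} (P : ι → Matrix (Fin n) (Fin n) K) (i : ι)
    (v : Fin n → K) (m : ℕ) :
    krylov (m + 1) (P i) v ≤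
      Submodule.span K {x | ∃ w : List ι, w.length ≤ m ∧ x = (w.map P).prod *ᵥ v} :=
  Submodule.span_le.mpr <| Set.range_subset_iff.mpr fun k =>
    Submodule.subset_span ⟨List.replicate k i, by simpa using Nat.lt_succ_iff.mp k.2,
      by rw [List.map_replicate, List.prod_replicate]⟩

end Krylov

theorem word_span_eq_krylov_sum {K : Type*} [Field K] {n : ℕ}
    (A : Matrix (Fin n) (Fin n) K) (τ₁ τ₂ : K) (hτ : τ₁ ≠ τ₂)
    (h1 : IsUnit (A + τ₁ • (1 : Matrix (Fin n) (Fin n) K)))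
    (h2 : IsUnit (A + τ₂ • (1 : Matrix (Fin n) (Fin n) K)))
    (b : Fin n → K) (m : ℕ)
    (P : Fin 2 → Matrix (Fin n) (Fin n) K)
    (hP1 : P 0 = (A + τ₁ • 1)⁻¹) (hP2 : P 1 = (A + τ₂ • 1)⁻¹)
    (W : Submodule K (Fin n → K))
    (hW : W = Submodule.span K
      {x | ∃ w : List (Fin 2), w.length ≤ m ∧ x = (w.map P).prod *ᵥ b}) :
    W = krylov (m + 1) (A + τ₁ • 1)⁻¹ b ⊔ krylov (m + 1) (A + τ₂ • 1)⁻¹ b ∧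
      Module.finrank K W ≤ 2 * m + 1 := by
  have h₀ := inv_add_smul_one_mul_inv_add_smul_one A hτ h1 h2
  have h₁ := inv_add_smul_one_mul_inv_add_smul_one A hτ.symm h2 h1
  rw [← hP1, ← hP2] at h₀ h₁
  have hWeq : W = krylov (m + 1) (P 0) b ⊔ krylov (m + 1) (P 1) b :=
    hW ▸ le_antisymm (span_words_le_krylov_sup h₀ h₁ b m)
      (sup_le (krylov_le_span_words P 0 b m) (krylov_le_span_words P 1 b m))
  rw [hP1, hP2] at hWeq
  exact ⟨hWeq, hWeq ▸ finrank_krylov_sup_krylov_le m _ _ b⟩
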